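/- Let V ⊆ L²(S¹,ℂⁿ) be a closed subspace with SV ⊊ V ⊆ V' where V' = Ψℋ₊ for Ψ unitary-valued a.e., and suppose SV' ⊆ V. Then there is a subspace α ⊆ ℂⁿ such that V = Ψ(α + λℋ₊), namely α is the set of zeroth Fourier coefficients of functions in Ψ^{−1}V. -/

import Mathlib

open MeasureTheory Complex
open scoped Matrix

noncomputable section

local instance : Fact (0 < 2 * Real.pi) := ⟨by positivity⟩

/-- The circle `S¹` parametrized as `ℝ/2πℤ`; the point `θ` corresponds to `λ = e^{iθ} ∈ S¹`. -/
abbrev Tc : Type := AddCircle (2 * Real.pi)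

/-- `ℂⁿ` as a Hilbert space. -/
abbrev Ecn (n : ℕ) : Type := EuclideanSpace ℂ (Fin n)

/-- The Hilbert space `L²(S¹, ℂⁿ)`. -/
abbrev H2 (n : ℕ) : Type := Lp (Ecn n) 2 (volume : Measure Tc)

/-- The Hardy space `ℋ₊ ⊂ L²(S¹,ℂⁿ)`: elements whose negative Fourier coefficients vanish. -/
def Hardy (n : ℕ) : Set (H2 n) :=
  {f | ∀ m : ℤ, m < 0 → fourierCoeff (f : Tc → Ecn n) m = 0}

/-- The subset `Φℋ₊` of `L²(S¹,ℂⁿ)`: the image of the Hardy space under pointwise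
multiplication by the matrix-valued function `Φ`. -/
def mulHardy {n : ℕ} (Φ : Tc → Matrix (Fin n) (Fin n) ℂ) : Set (H2 n) :=
  {g | ∃ f ∈ Hardy n, (g : Tc → Ecn n) =ᵐ[volume] fun θ =>
    (WithLp.equiv 2 (∀ _ : Fin n, ℂ)).symm
      ((Φ θ).mulVec (WithLp.equiv 2 (∀ _ : Fin n, ℂ) ((f : Tc → Ecn n) θ)))}

/-! If `g = Ψ f ∈ Ψ(α + λℋ₊)`, pick `g₀ = Ψ f₀ ∈ V` with `f̂₀(0) = f̂(0)`. Then `f - f₀` has no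
Fourier coefficients of index `≤ 0`, so `f - f₀ = λ h` with `h ∈ ℋ₊`, and
`g - g₀ = λ Ψ h = S (Ψ h) ∈ S V' ⊆ V`. Conversely `g ∈ V ⊆ Ψℋ₊` is `Ψ f` with `f = Ψ⁻¹ g`,
whose zeroth coefficient lies in `α` by definition. -/

namespace AddCircle

variable {T : ℝ} [Fact (0 < T)] {E : Type*} [NormedAddCommGroup E]

lemma ae_haarAddCircle : ae (haarAddCircle : Measure (AddCircle T)) = ae volume := by
  rw [volume_eq_smul_haarAddCircle,
    Measure.ae_ennreal_smul_measure_eq (by simpa using (Fact.out : 0 < T))]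

lemma haarAddCircle_eq_smul_volume :
    (haarAddCircle : Measure (AddCircle T)) = (ENNReal.ofReal T)⁻¹ • volume := by
  rw [volume_eq_smul_haarAddCircle, smul_smul,
    ENNReal.inv_mul_cancel (by simpa using (Fact.out : 0 < T)) ENNReal.ofReal_ne_top, one_smul]

lemma integrable_haarAddCircle_of_memLp {p : ENNReal} [Fact (1 ≤ p)] {f : AddCircle T → E}
    (hf : MemLp f p volume) : Integrable f haarAddCircle := by
  rw [haarAddCircle_eq_smul_volume]
  exact (hf.integrable Fact.out).smul_measure (by simpa using (Fact.out : 0 < T))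

variable [NormedSpace ℂ E]

lemma fourierCoeff_congr_ae_volume {f g : AddCircle T → E} (h : f =ᵐ[volume] g) :
    fourierCoeff f = fourierCoeff g :=
  fourierCoeff_congr_ae (by rwa [ae_haarAddCircle])

lemma fourierCoeff_fourier_smul (f : AddCircle T → E) (k n : ℤ) :
    fourierCoeff (fun t => fourier k t • f t) n = fourierCoeff f (n - k) := by
  have hindex : -(n - k) = -n + k := by ring
  simp only [fourierCoeff, smul_smul, ← fourier_add, hindex]

variable (E) in
def fourierCoeffLp (p : ENNReal) [Fact (1 ≤ p)] (n : ℤ) :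
    Lp E p (volume : Measure (AddCircle T)) →ₗ[ℂ] E where
  toFun f := fourierCoeff f n
  map_add' f g := by
    rw [fourierCoeff_congr_ae_volume (Lp.coeFn_add f g),
      fourierCoeff.add (integrable_haarAddCircle_of_memLp (Lp.memLp f))
        (integrable_haarAddCircle_of_memLp (Lp.memLp g))]
    rfl
  map_smul' c f := by
    rw [fourierCoeff_congr_ae_volume (Lp.coeFn_smul c f)]
    exact fourierCoeff.const_smul _ c n

lemma fourierCoeff_coeFn_sub {p : ENNReal} [Fact (1 ≤ p)]
    (f g : Lp E p (volume : Measure (AddCircle T))) (n : ℤ) :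
    fourierCoeff ⇑(f - g) n = fourierCoeff f n - fourierCoeff g n :=
  map_sub (fourierCoeffLp E p n) f g

lemma exists_toCircle_smul_ae_eq_of_fourierCoeff_nonpos {p : ENNReal} [Fact (1 ≤ p)]
    (w : Lp E p (volume : Measure (AddCircle T))) (hw : ∀ m ≤ 0, fourierCoeff w m = 0) :
    ∃ h : Lp E p (volume : Measure (AddCircle T)), (∀ m < 0, fourierCoeff h m = 0) ∧
      (w : AddCircle T → E) =ᵐ[volume] fun t => (toCircle t : ℂ) • h t := by
  have hF : MemLp (fun t => fourier (-1) t • w t) p volume :=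
    (Lp.memLp w).of_le
      ((map_continuous _).aestronglyMeasurable.smul (Lp.aestronglyMeasurable w))
      (.of_forall fun t => by rw [norm_smul, fourier_apply, Circle.norm_coe, one_mul])
  refine ⟨hF.toLp _, fun m hm => ?_, ?_⟩
  · rw [fourierCoeff_congr_ae_volume hF.coeFn_toLp, fourierCoeff_fourier_smul]
    exact hw _ (by omega)
  · filter_upwards [hF.coeFn_toLp] with t ht
    rw [ht, smul_smul, ← fourier_one, ← fourier_add]
    simp

end AddCircle

namespace Matrix

variable {𝕜 ι κ X : Type*} [RCLike 𝕜] [Fintype ι] [DecidableEq ι] [Fintype κ]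

lemma norm_toEuclideanLin_apply_of_mem_unitaryGroup {U : Matrix ι ι 𝕜}
    (hU : U ∈ unitaryGroup ι 𝕜) (v : EuclideanSpace 𝕜 ι) : ‖toEuclideanLin U v‖ = ‖v‖ :=
  have hU' : toEuclideanCLM (n := ι) (𝕜 := 𝕜) U ∈ unitary _ := Unitary.map_mem _ hU
  ContinuousLinearMap.norm_map_of_mem_unitary hU' v

lemma toEuclideanLin_inv_apply_apply {U : Matrix ι ι 𝕜} (hU : IsUnit U.det)
    (v : EuclideanSpace 𝕜 ι) : toEuclideanLin U⁻¹ (toEuclideanLin U v) = v := by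
  rw [toLpLin_apply, toLpLin_apply, WithLp.ofLp_toLp, mulVec_mulVec, nonsing_inv_mul U hU,
    one_mulVec, WithLp.toLp_ofLp]

variable [MeasurableSpace X] {μ : Measure X}

lemma aestronglyMeasurable_toEuclideanLin_apply {Φ : X → Matrix κ ι 𝕜}
    (hΦ : ∀ i j, Measurable fun x => Φ x i j) {f : X → EuclideanSpace 𝕜 ι}
    (hf : AEStronglyMeasurable f μ) :
    AEStronglyMeasurable (fun x => toEuclideanLin (Φ x) (f x)) μ := by
  have hcoord : ∀ j, AEMeasurable (fun x => f x j) μ := fun j =>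
    ((PiLp.proj (𝕜 := 𝕜) 2 (fun _ : ι => 𝕜) j).continuous.comp_aestronglyMeasurable
      hf).aemeasurable
  refine (PiLp.continuous_toLp 2 _).comp_aestronglyMeasurable
    (aemeasurable_pi_lambda _ fun i => ?_).aestronglyMeasurable
  show AEMeasurable (fun x => ∑ j, Φ x i j * f x j) μ
  exact Finset.aemeasurable_fun_sum _ fun j _ => (hΦ i j).aemeasurable.mul (hcoord j)

lemma memLp_toEuclideanLin_apply {p : ENNReal} {Φ : X → Matrix ι ι 𝕜}
    (hΦ : ∀ i j, Measurable fun x => Φ x i j) (hU : ∀ᵐ x ∂μ, Φ x ∈ unitaryGroup ι 𝕜)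
    {f : X → EuclideanSpace 𝕜 ι} (hf : MemLp f p μ) :
    MemLp (fun x => toEuclideanLin (Φ x) (f x)) p μ :=
  hf.of_le (aestronglyMeasurable_toEuclideanLin_apply hΦ hf.1)
    (hU.mono fun _ hx => (norm_toEuclideanLin_apply_of_mem_unitaryGroup hx _).le)

lemma ae_eq_toEuclideanLin_inv_apply {Φ : X → Matrix ι ι 𝕜} (hΦ : ∀ᵐ x ∂μ, IsUnit (Φ x).det)
    {f g : X → EuclideanSpace 𝕜 ι} (h : g =ᵐ[μ] fun x => toEuclideanLin (Φ x) (f x)) :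
    f =ᵐ[μ] fun x => toEuclideanLin (Φ x)⁻¹ (g x) := by
  filter_upwards [h, hΦ] with x hx hxΦ
  rw [hx, toEuclideanLin_inv_apply_apply hxΦ]

end Matrix

section PointwiseLinearMap

variable {X 𝕜 E F : Type*} [MeasurableSpace X] {μ : Measure X} {p : ENNReal} [NormedField 𝕜]
  [NormedAddCommGroup E] [NormedSpace 𝕜 E] [NormedAddCommGroup F] [NormedSpace 𝕜 F]
  (A : X → E →ₗ[𝕜] F)

lemma ae_eq_apply_add {f₁ f₂ : Lp F p μ} {g₁ g₂ : Lp E p μ}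
    (h₁ : (f₁ : X → F) =ᵐ[μ] fun x => A x (g₁ x)) (h₂ : (f₂ : X → F) =ᵐ[μ] fun x => A x (g₂ x)) :
    ⇑(f₁ + f₂) =ᵐ[μ] fun x => A x ((g₁ + g₂ : Lp E p μ) x) := by
  filter_upwards [Lp.coeFn_add f₁ f₂, Lp.coeFn_add g₁ g₂, h₁, h₂] with x hf hg h₁ h₂
  rw [hf, hg, Pi.add_apply, Pi.add_apply, h₁, h₂, map_add]

lemma ae_eq_apply_sub {f₁ f₂ : Lp F p μ} {g₁ g₂ : Lp E p μ}
    (h₁ : (f₁ : X → F) =ᵐ[μ] fun x => A x (g₁ x)) (h₂ : (f₂ : X → F) =ᵐ[μ] fun x => A x (g₂ x)) :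
    ⇑(f₁ - f₂) =ᵐ[μ] fun x => A x ((g₁ - g₂ : Lp E p μ) x) := by
  filter_upwards [Lp.coeFn_sub f₁ f₂, Lp.coeFn_sub g₁ g₂, h₁, h₂] with x hf hg h₁ h₂
  rw [hf, hg, Pi.sub_apply, Pi.sub_apply, h₁, h₂, map_sub]

lemma ae_eq_apply_smul (c : 𝕜) {f : Lp F p μ} {g : Lp E p μ}
    (h : (f : X → F) =ᵐ[μ] fun x => A x (g x)) :
    ⇑(c • f) =ᵐ[μ] fun x => A x ((c • g : Lp E p μ) x) := by
  filter_upwards [Lp.coeFn_smul c f, Lp.coeFn_smul c g, h] with x hf hg h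
  rw [hf, hg, Pi.smul_apply, Pi.smul_apply, h, map_smul]

def pointwiseMap (V : Submodule 𝕜 (Lp E p μ)) : Submodule 𝕜 (Lp F p μ) where
  carrier := {f | ∃ g ∈ V, (f : X → F) =ᵐ[μ] fun x => A x (g x)}
  add_mem' := fun ⟨g₁, hg₁, h₁⟩ ⟨g₂, hg₂, h₂⟩ =>
    ⟨g₁ + g₂, V.add_mem hg₁ hg₂, ae_eq_apply_add A h₁ h₂⟩
  zero_mem' := ⟨0, V.zero_mem, by
    filter_upwards [Lp.coeFn_zero F p μ, Lp.coeFn_zero E p μ] with x hf hg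
    rw [hf, hg, Pi.zero_apply, Pi.zero_apply, map_zero]⟩
  smul_mem' c _ := fun ⟨g, hg, h⟩ => ⟨c • g, V.smul_mem c hg, ae_eq_apply_smul A c h⟩

end PointwiseLinearMap

open Matrix in
lemma mem_of_fourierCoeff_zero_eq {n : ℕ} {S : H2 n → H2 n}
    (hS : ∀ f : H2 n, (S f : Tc → Ecn n) =ᵐ[volume]
      fun θ => (AddCircle.toCircle θ : ℂ) • (f : Tc → Ecn n) θ)
    {Ψ : Tc → Matrix (Fin n) (Fin n) ℂ} (hmeas : ∀ i j : Fin n, Measurable fun θ => Ψ θ i j)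
    (hunit : ∀ᵐ θ ∂(volume : Measure Tc), Ψ θ ∈ unitaryGroup (Fin n) ℂ)
    {V : Submodule ℂ (H2 n)} (hSV' : ∀ g ∈ mulHardy Ψ, S g ∈ V)
    {g₀ g f₀ f : H2 n} (hg₀ : g₀ ∈ V) (hf₀ : f₀ ∈ Hardy n) (hf : f ∈ Hardy n)
    (hg₀f₀ : (g₀ : Tc → Ecn n) =ᵐ[volume] fun θ => toEuclideanLin (Ψ θ) (f₀ θ))
    (hgf : (g : Tc → Ecn n) =ᵐ[volume] fun θ => toEuclideanLin (Ψ θ) (f θ))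
    (hcoeff : fourierCoeff (f : Tc → Ecn n) 0 = fourierCoeff (f₀ : Tc → Ecn n) 0) :
    g ∈ V := by
  obtain ⟨h, hh, hfh⟩ := AddCircle.exists_toCircle_smul_ae_eq_of_fourierCoeff_nonpos (f - f₀)
    fun m hm => by
      rw [AddCircle.fourierCoeff_coeFn_sub, sub_eq_zero]
      rcases hm.lt_or_eq with hm | rfl
      · rw [hf m hm, hf₀ m hm]
      · exact hcoeff
  have hu := memLp_toEuclideanLin_apply hmeas hunit (Lp.memLp h)
  have hSu : S (hu.toLp _) ∈ V := hSV' _ ⟨h, hh, hu.coeFn_toLp⟩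
  have hdiff : g - g₀ = S (hu.toLp _) := by
    refine Lp.ext ?_
    filter_upwards [ae_eq_apply_sub (fun θ => toEuclideanLin (Ψ θ)) hgf hg₀f₀, hfh,
      hS (hu.toLp _), hu.coeFn_toLp] with θ hsub hshift hSθ huθ
    rw [hsub, hshift, map_smul, hSθ, huθ]
  rwa [← V.sub_mem_iff_left hg₀, hdiff]

theorem sandwiched_shift_invariant_subspace_form_general
    (n : ℕ)
    (S : H2 n →L[ℂ] H2 n)
    (hS : ∀ f : H2 n, (S f : Tc → Ecn n) =ᵐ[volume]
      fun θ => (AddCircle.toCircle θ : ℂ) • (f : Tc → Ecn n) θ)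
    (Ψ : Tc → Matrix (Fin n) (Fin n) ℂ)
    (hmeas : ∀ i j : Fin n, Measurable fun θ => Ψ θ i j)
    (hunit : ∀ᵐ θ ∂(volume : Measure Tc), Ψ θ ∈ Matrix.unitaryGroup (Fin n) ℂ)
    (V : Submodule ℂ (H2 n))
    (hVV' : (V : Set (H2 n)) ⊆ mulHardy Ψ)
    (hSV' : ∀ g ∈ mulHardy Ψ, S g ∈ V) :
    ∃ α : Submodule ℂ (Ecn n),
      ((V : Set (H2 n)) = {g : H2 n | ∃ f ∈ Hardy n,
        fourierCoeff (f : Tc → Ecn n) 0 ∈ α ∧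
        (g : Tc → Ecn n) =ᵐ[volume] fun θ =>
          (WithLp.equiv 2 (∀ _ : Fin n, ℂ)).symm
            ((Ψ θ).mulVec (WithLp.equiv 2 (∀ _ : Fin n, ℂ) ((f : Tc → Ecn n) θ)))}) ∧
      (∀ c : Ecn n, c ∈ α ↔ ∃ f : H2 n,
        (∃ g ∈ V, (f : Tc → Ecn n) =ᵐ[volume] fun θ =>
          (WithLp.equiv 2 (∀ _ : Fin n, ℂ)).symm
            ((Ψ θ)⁻¹.mulVec (WithLp.equiv 2 (∀ _ : Fin n, ℂ) ((g : Tc → Ecn n) θ)))) ∧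
        fourierCoeff (f : Tc → Ecn n) 0 = c) := by
  have hdet : ∀ᵐ θ ∂(volume : Measure Tc), IsUnit (Ψ θ).det :=
    hunit.mono fun _ h => Matrix.isUnit_det_of_left_inverse (Unitary.star_mul_self_of_mem h)
  let α := (pointwiseMap (fun θ => Matrix.toEuclideanLin (Ψ θ)⁻¹) V).map
    (AddCircle.fourierCoeffLp (Ecn n) 2 0)
  -- `(WithLp.equiv 2 _).symm (M *ᵥ WithLp.equiv 2 _ v)` is `toEuclideanLin M v` by `rfl`.
  refine ⟨α, Set.ext fun g => ⟨fun hg => ?_,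
    fun ⟨f, hf, ⟨f₀, ⟨g₀, hg₀, hf₀g₀⟩, hcoeff⟩, hgf⟩ => ?_⟩, fun c => Iff.rfl⟩
  · obtain ⟨f, hf, hgf⟩ := hVV' hg
    exact ⟨f, hf, ⟨f, ⟨g, hg, Matrix.ae_eq_toEuclideanLin_inv_apply hdet hgf⟩, rfl⟩, hgf⟩
  · obtain ⟨f₁, hf₁, hg₀f₁⟩ := hVV' hg₀
    have hf₀f₁ : (f₀ : Tc → Ecn n) =ᵐ[volume] f₁ :=
      hf₀g₀.trans (Matrix.ae_eq_toEuclideanLin_inv_apply hdet hg₀f₁).symm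
    refine mem_of_fourierCoeff_zero_eq hS hmeas hunit hSV' hg₀ hf₁ hf hg₀f₁ hgf ?_
    rw [← AddCircle.fourierCoeff_congr_ae_volume hf₀f₁]
    exact hcoeff.symm

theorem sandwiched_shift_invariant_subspace_form
    (n : ℕ)
    (S : H2 n →L[ℂ] H2 n)
    (hS : ∀ f : H2 n, (S f : Tc → Ecn n) =ᵐ[volume]
      fun θ => (AddCircle.toCircle θ : ℂ) • (f : Tc → Ecn n) θ)
    (Ψ : Tc → Matrix (Fin n) (Fin n) ℂ)
    (hmeas : ∀ i j : Fin n, Measurable fun θ => Ψ θ i j)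
    (hunit : ∀ᵐ θ ∂(volume : Measure Tc), Ψ θ ∈ Matrix.unitaryGroup (Fin n) ℂ)
    (V : Submodule ℂ (H2 n)) (hVclosed : IsClosed (V : Set (H2 n)))
    (hSV : (⇑S '' (V : Set (H2 n))) ⊂ (V : Set (H2 n)))
    (hVV' : (V : Set (H2 n)) ⊆ mulHardy Ψ)
    (hSV' : ∀ g ∈ mulHardy Ψ, S g ∈ V) :
    ∃ α : Submodule ℂ (Ecn n),
      ((V : Set (H2 n)) = {g : H2 n | ∃ f ∈ Hardy n,
        fourierCoeff (f : Tc → Ecn n) 0 ∈ α ∧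
        (g : Tc → Ecn n) =ᵐ[volume] fun θ =>
          (WithLp.equiv 2 (∀ _ : Fin n, ℂ)).symm
            ((Ψ θ).mulVec (WithLp.equiv 2 (∀ _ : Fin n, ℂ) ((f : Tc → Ecn n) θ)))}) ∧
      (∀ c : Ecn n, c ∈ α ↔ ∃ f : H2 n,
        (∃ g ∈ V, (f : Tc → Ecn n) =ᵐ[volume] fun θ =>
          (WithLp.equiv 2 (∀ _ : Fin n, ℂ)).symm
            ((Ψ θ)⁻¹.mulVec (WithLp.equiv 2 (∀ _ : Fin n, ℂ) ((g : Tc → Ecn n) θ)))) ∧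
        fourierCoeff (f : Tc → Ecn n) 0 = c) :=
  sandwiched_shift_invariant_subspace_form_general n S hS Ψ hmeas hunit V hVV' hSV'
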